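/- arXiv:1701.00335 — 2 statements merged into one kernel-verified Lean document; each statement's English description precedes it below -/
import Mathlib

section
/- Fix β > 0. The series ∑_{k=1}^∞ k·ξ_β(k) converges and is bounded above by β·(β+2). -/
/-- The tail sequence of the invariant distribution `π_β^P` of the mean-field limit
of the Power of Choice policy: `ξ_β(0) = 1` and
`ξ_β(x+1) = (−1 + √(1 + 4β²ξ_β(x)²))/(2β)`. -/
noncomputable def xi (β : ℝ) : ℕ → ℝ
  | 0 => 1
  | x + 1 => (-1 + Real.sqrt (1 + 4 * β ^ 2 * (xi β x) ^ 2)) / (2 * β)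

/-!
The recursion `ξ(k+1) = β (ξ(k)² - ξ(k+1)²)` telescopes, so `∑ ξ(k) ≤ 1 + β`, and summation by
parts turns `∑ k ξ(k)` into at most `β ∑ ξ(k)²`. Since `0 ≤ ξ ≤ 1`, this is at most
`β ∑ ξ(k) ≤ β (1 + β)`.
-/

open Finset

theorem Finset.sum_range_succ_mul_sub_succ {R : Type*} [CommRing R] (a : ℕ → R) (n : ℕ) :
    ∑ k ∈ range n, ((k : R) + 1) * (a k - a (k + 1)) = ∑ k ∈ range n, a k - n * a n := by
  induction n with
  | zero => simp
  | succ n ih =>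
    rw [sum_range_succ, ih, sum_range_succ]
    push_cast
    ring

section Xi

variable {β : ℝ}

theorem xi_nonneg (hβ : 0 < β) : ∀ x, 0 ≤ xi β x
  | 0 => zero_le_one
  | x + 1 => by
    have hsqrt : 1 ≤ √(1 + 4 * β ^ 2 * xi β x ^ 2) := Real.one_le_sqrt.mpr (by nlinarith)
    exact div_nonneg (by linarith) (by positivity)

theorem xi_succ_eq (hβ : 0 < β) (x : ℕ) :
    xi β (x + 1) = β * (xi β x ^ 2 - xi β (x + 1) ^ 2) := by
  have hsqrt : √(1 + 4 * β ^ 2 * xi β x ^ 2) = 2 * β * xi β (x + 1) + 1 := by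
    simp only [xi]
    field_simp
    ring
  have hsq := Real.sq_sqrt (by positivity : (0 : ℝ) ≤ 1 + 4 * β ^ 2 * xi β x ^ 2)
  rw [hsqrt] at hsq
  apply mul_left_cancel₀ (by positivity : 4 * β ≠ 0)
  linear_combination hsq

theorem xi_antitone (hβ : 0 < β) : Antitone (xi β) := by
  refine antitone_nat_of_succ_le fun x => ?_
  have hsq : xi β (x + 1) ^ 2 ≤ xi β x ^ 2 := by
    have := xi_succ_eq hβ x ▸ xi_nonneg hβ (x + 1)
    nlinarith
  exact (pow_le_pow_iff_left₀ (xi_nonneg hβ _) (xi_nonneg hβ _) two_ne_zero).mp hsq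

theorem xi_le_one (hβ : 0 < β) (x : ℕ) : xi β x ≤ 1 :=
  xi_antitone hβ (Nat.zero_le x)

theorem sum_range_xi_succ (hβ : 0 < β) (n : ℕ) :
    ∑ k ∈ range n, xi β (k + 1) = β * (1 - xi β n ^ 2) := by
  rw [sum_congr rfl fun k _ => xi_succ_eq hβ k, ← mul_sum, sum_range_sub' (fun k => xi β k ^ 2)]
  norm_num [xi]

theorem sum_range_xi_le (hβ : 0 < β) (n : ℕ) : ∑ k ∈ range n, xi β k ≤ 1 + β :=
  calc ∑ k ∈ range n, xi β k
      ≤ ∑ k ∈ range (n + 1), xi β k := by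
        rw [sum_range_succ]; exact le_add_of_nonneg_right (xi_nonneg hβ n)
    _ = 1 + β * (1 - xi β n ^ 2) := by
        rw [sum_range_succ', sum_range_xi_succ hβ, add_comm]; rfl
    _ ≤ 1 + β := by nlinarith [sq_nonneg (xi β n)]

theorem sum_range_succ_mul_xi_succ (hβ : 0 < β) (n : ℕ) :
    ∑ k ∈ range n, ((k : ℝ) + 1) * xi β (k + 1) =
      β * (∑ k ∈ range n, xi β k ^ 2 - n * xi β n ^ 2) := by
  rw [sum_congr rfl fun k _ => congrArg _ (xi_succ_eq hβ k)]
  simp_rw [mul_left_comm _ β, ← mul_sum, sum_range_succ_mul_sub_succ (fun k => xi β k ^ 2)]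

theorem sum_range_mul_xi_le (hβ : 0 < β) (n : ℕ) :
    ∑ k ∈ range n, (k : ℝ) * xi β k ≤ β * (1 + β) := by
  cases n with
  | zero => simp only [range_zero, sum_empty]; positivity
  | succ n =>
    have hsq : ∑ k ∈ range n, xi β k ^ 2 ≤ ∑ k ∈ range n, xi β k :=
      sum_le_sum fun k _ => pow_le_of_le_one (xi_nonneg hβ k) (xi_le_one hβ k) two_ne_zero
    calc ∑ k ∈ range (n + 1), (k : ℝ) * xi β k
        = β * (∑ k ∈ range n, xi β k ^ 2 - n * xi β n ^ 2) := by
          rw [sum_range_succ', ← sum_range_succ_mul_xi_succ hβ]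
          push_cast
          ring
      _ ≤ β * ∑ k ∈ range n, xi β k := by
          gcongr
          nlinarith [sq_nonneg (xi β n), n.cast_nonneg (α := ℝ)]
      _ ≤ β * (1 + β) := by gcongr; exact sum_range_xi_le hβ n

end Xi

/-- The series `∑_{k=1}^∞ k·ξ_β(k)` converges and is bounded above by `β(β+2)`. -/
theorem xi_weighted_sum_bound (β : ℝ) (hβ : 0 < β) :
    Summable (fun k : ℕ => (k : ℝ) * xi β k) ∧
      ∑' k : ℕ, (k : ℝ) * xi β k ≤ β * (β + 2) := by
  have hnonneg : ∀ k : ℕ, 0 ≤ (k : ℝ) * xi β k :=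
    fun k => mul_nonneg k.cast_nonneg (xi_nonneg hβ k)
  have hpartial : ∀ n, ∑ k ∈ range n, (k : ℝ) * xi β k ≤ β * (β + 2) :=
    fun n => (sum_range_mul_xi_le hβ n).trans (by nlinarith)
  exact ⟨summable_of_sum_range_le hnonneg hpartial,
    Real.tsum_le_of_sum_range_le hnonneg hpartial⟩
end

section
/- For every real x ≥ 0, the limit as β → ∞ of ξ_β(⌈βx⌉) equals max(2 − x, 0)/2. Equivalently, if X̄_β^P has distribution π_β^P, then for every x ≥ 0, P(X̄_β^P/β ≥ x) converges as β → ∞ to 1 − x/2 when x < 2 and to 0 when x ≥ 2. -/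
lemma xi_pos {β : ℝ} (hβ : 0 < β) : ∀ n, 0 < xi β n := by
  intro n
  induction n with
  | zero => simp [xi]
  | succ n ih =>
    have h1 : (1:ℝ) < Real.sqrt (1 + 4 * β ^ 2 * (xi β n) ^ 2) := by
      have := (Real.lt_sqrt (by norm_num : (0:ℝ) ≤ 1)).mpr (by nlinarith [mul_pos (pow_pos hβ 2) (pow_pos ih 2)] : (1:ℝ)^2 < 1 + 4 * β ^ 2 * (xi β n) ^ 2)
      exact this
    show 0 < (-1 + Real.sqrt (1 + 4 * β ^ 2 * (xi β n) ^ 2)) / (2 * β)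
    apply div_pos (by linarith) (by linarith)

lemma xi_identity {β : ℝ} (hβ : 0 < β) (n : ℕ) :
    β * (xi β (n+1))^2 + xi β (n+1) = β * (xi β n)^2 := by
  have hnn : (0:ℝ) ≤ 1 + 4 * β ^ 2 * (xi β n) ^ 2 := by positivity
  have hs : (Real.sqrt (1 + 4 * β ^ 2 * (xi β n) ^ 2))^2 = 1 + 4 * β ^ 2 * (xi β n) ^ 2 :=
    Real.sq_sqrt hnn
  have hx1 : xi β (n+1) = (-1 + Real.sqrt (1 + 4 * β ^ 2 * (xi β n) ^ 2)) / (2 * β) := rfl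
  rw [hx1]
  field_simp
  have hs2 : (Real.sqrt (1 + β ^ 2 * 4 * (xi β n) ^ 2))^2 = 1 + 4 * β ^ 2 * (xi β n) ^ 2 := by
    rw [mul_comm (β^2) 4]; exact hs
  linear_combination hs2

lemma xi_succ_lt {β : ℝ} (hβ : 0 < β) (n : ℕ) : xi β (n+1) < xi β n := by
  have hid := xi_identity hβ n
  have h1 := xi_pos hβ n
  have h2 := xi_pos hβ (n+1)
  by_contra h
  push_neg at h
  nlinarith [pow_le_pow_left₀ h1.le h 2, mul_le_mul_of_nonneg_left (pow_le_pow_left₀ h1.le h 2) hβ.le]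

lemma xi_anti {β : ℝ} (hβ : 0 < β) {m n : ℕ} (h : m ≤ n) : xi β n ≤ xi β m := by
  have ha : Antitone (xi β) := antitone_nat_of_succ_le fun n => (xi_succ_lt hβ n).le
  exact ha h

lemma xi_step_lower {β : ℝ} (hβ : 0 < β) (n : ℕ) :
    xi β n - 1 / (2 * β) ≤ xi β (n+1) := by
  have hid := xi_identity hβ n
  have h1 := xi_pos hβ n
  have h2 := xi_pos hβ (n+1)
  have h3 := xi_succ_lt hβ n
  have e1 : 2*β*(xi β (n+1))*(xi β n - xi β (n+1)) ≤ xi β (n+1) := by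
    nlinarith [mul_nonneg hβ.le (sq_nonneg (xi β n - xi β (n+1)))]
  have e2 : 2*β*(xi β n - xi β (n+1)) ≤ 1 := by
    nlinarith [e1, h2]
  rw [sub_le_iff_le_add, ← sub_le_iff_le_add', le_div_iff₀ (by linarith : (0:ℝ) < 2*β)]
  linarith

lemma xi_lower {β : ℝ} (hβ : 0 < β) (n : ℕ) : 1 - n / (2 * β) ≤ xi β n := by
  induction n with
  | zero => simp [xi]
  | succ n ih =>
    have := xi_step_lower hβ n
    have hn : ((n:ℝ)+1) / (2*β) = n / (2*β) + 1/(2*β) := by ring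
    push_cast
    rw [hn]
    linarith

lemma xi_step_upper {β : ℝ} (hβ : 0 < β) (n : ℕ) :
    xi β (n+1) ≤ xi β n - 1 / (2 * β) + 1 / (4 * β^2 * xi β n) := by
  have hid := xi_identity hβ n
  have h1 := xi_pos hβ n
  have h2 := xi_pos hβ (n+1)
  have h3 := xi_succ_lt hβ n
  have hsl := xi_step_lower hβ n
  -- 2βξ(ξ−ξ') ≥ ξ' ≥ ξ − 1/(2β)
  have e1 : xi β (n+1) ≤ 2*β*(xi β n)*(xi β n - xi β (n+1)) := by
    nlinarith [mul_nonneg hβ.le (sq_nonneg (xi β n - xi β (n+1)))]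
  have hu : 2*β * (1/(2*β)) = 1 := by field_simp
  have key : 2*β*xi β n - 1 ≤ (xi β n - xi β (n+1)) * (4*β^2*xi β n) := by
    nlinarith [mul_le_mul_of_nonneg_left e1 (by positivity : (0:ℝ) ≤ 2*β),
      mul_le_mul_of_nonneg_left hsl (by positivity : (0:ℝ) ≤ 2*β)]
  have w : (2*β*xi β n - 1)/(4*β^2*xi β n) ≤ xi β n - xi β (n+1) := by
    rw [div_le_iff₀ (by positivity : (0:ℝ) < 4*β^2*xi β n)]
    linarith [key]
  have w2 : (2*β*xi β n - 1)/(4*β^2*xi β n) = 1/(2*β) - 1/(4*β^2*xi β n) := by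
    field_simp
    ring
  rw [w2] at w
  linarith

lemma xi_upper {β δ : ℝ} (hβ : 0 < β) (hδ : 0 < δ) :
    ∀ n : ℕ, (∀ k < n, δ ≤ xi β k) → xi β n ≤ 1 - n / (2*β) + n / (4*β^2*δ) := by
  intro n
  induction n with
  | zero => intro _; simp [xi]
  | succ n ih =>
    intro h
    have hn : δ ≤ xi β n := h n (Nat.lt_succ_self n)
    have ihn := ih fun k hk => h k (hk.trans (Nat.lt_succ_self n))
    have hsu := xi_step_upper hβ n
    have hmono : 1 / (4*β^2*xi β n) ≤ 1 / (4*β^2*δ) := by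
      apply div_le_div_of_nonneg_left (by norm_num) (by positivity)
      have := xi_pos hβ n
      nlinarith [pow_pos hβ 2]
    push_cast
    have e1 : ((n:ℝ)+1) / (2*β) = n / (2*β) + 1/(2*β) := by ring
    have e2 : ((n:ℝ)+1) / (4*β^2*δ) = n / (4*β^2*δ) + 1/(4*β^2*δ) := by ring
    rw [e1, e2]
    linarith

lemma xi_tendsto_of_lt_two {y : ℝ} (hy0 : 0 ≤ y) (hy2 : y < 2) :
    Filter.Tendsto (fun β : ℝ => xi β ⌈β * y⌉₊) Filter.atTop (nhds (1 - y/2)) := by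
  rw [Metric.tendsto_atTop]
  intro ε hε
  set δ : ℝ := 1 - y/2 with hδdef
  have hδ : 0 < δ := by simp only [hδdef]; linarith
  set C : ℝ := 1/2 + (y+1)/(4*δ) with hCdef
  have hC0 : 0 ≤ (y+1)/(4*δ) := div_nonneg (by linarith) (by positivity)
  have hCge : 1/2 ≤ C := by simp only [hCdef]; linarith
  refine ⟨max 1 ((C+1)/ε), fun β hβB => ?_⟩
  have hβ1 : 1 ≤ β := le_trans (le_max_left _ _) hβB
  have hβ : 0 < β := by linarith
  have hCβ : C/β < ε := by
    rw [div_lt_iff₀ hβ]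
    have h' : (C+1)/ε ≤ β := le_trans (le_max_right _ _) hβB
    rw [div_le_iff₀ hε] at h'
    nlinarith
  set n := ⌈β*y⌉₊ with hndef
  have hnu : (n:ℝ) < β*y + 1 := Nat.ceil_lt_add_one (by positivity)
  have hnl : β*y ≤ (n:ℝ) := Nat.le_ceil _
  have hk_all : ∀ k < n, δ ≤ xi β k := by
    intro k hk
    have hk' : (k:ℝ) + 1 ≤ (n:ℝ) := by exact_mod_cast hk
    have hkr : (k:ℝ) < β*y := by linarith
    have hdiv : (k:ℝ)/(2*β) ≤ y/2 := by
      rw [div_le_iff₀ (by linarith : (0:ℝ) < 2*β)]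
      nlinarith
    have := xi_lower hβ k
    simp only [hδdef]
    linarith
  have hub := xi_upper hβ hδ n hk_all
  have hlb := xi_lower hβ n
  -- upper bound pieces
  have u1 : y/2 ≤ (n:ℝ)/(2*β) := by
    have e : y/2 = (β*y)/(2*β) := by field_simp
    rw [e]
    exact (div_le_div_iff_of_pos_right (by linarith)).mpr hnl
  have u2a : (n:ℝ)/(4*β^2*δ) ≤ (β*y+β)/(4*β^2*δ) :=
    (div_le_div_iff_of_pos_right (by positivity)).mpr (by nlinarith)
  have u2b : (β*y+β)/(4*β^2*δ) = ((y+1)/(4*δ))/β := by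
    field_simp
  have u2c : ((y+1)/(4*δ))/β ≤ C/β := (div_le_div_iff_of_pos_right hβ).mpr (by simp only [hCdef]; linarith)
  -- lower bound pieces
  have l1 : (n:ℝ)/(2*β) ≤ (β*y+1)/(2*β) := (div_le_div_iff_of_pos_right (by linarith)).mpr hnu.le
  have l2 : (β*y+1)/(2*β) = y/2 + (1/2)/β := by field_simp
  have l3 : (1/2)/β ≤ C/β := (div_le_div_iff_of_pos_right hβ).mpr hCge
  rw [Real.dist_eq, abs_lt]
  clear_value δ C n
  rw [l2] at l1
  constructor
  · linarith [hlb, l1, l3, hCβ, hδdef]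
  · linarith [hub, u1, u2a, u2c, hCβ, hδdef]


/-- High-load limit of the tail of `π_β^P`: for every `x ≥ 0`,
`ξ_β(⌈βx⌉) → max(2 − x, 0)/2` as `β → ∞`; i.e. `P(X̄_β^P/β ≥ x)` converges to
`1 − x/2` for `x < 2` and to `0` for `x ≥ 2`. -/
theorem xi_high_load_limit (x : ℝ) (hx : 0 ≤ x) :
    Filter.Tendsto (fun β : ℝ => xi β ⌈β * x⌉₊) Filter.atTop
      (nhds (max (2 - x) 0 / 2)) := by
  rcases lt_or_ge x 2 with hx2 | hx2
  · have h := xi_tendsto_of_lt_two hx hx2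
    have : max (2 - x) 0 / 2 = 1 - x/2 := by
      rw [max_eq_left (by linarith)]
      ring
    rw [this]
    exact h
  · have hmax : max (2 - x) 0 / 2 = 0 := by
      rw [max_eq_right (by linarith)]
      norm_num
    rw [hmax, Metric.tendsto_atTop]
    intro ε hε
    set m : ℝ := min ε 1 with hmdef
    have hm0 : 0 < m := lt_min hε one_pos
    have hm1 : m ≤ 1 := min_le_right _ _
    have hmε : m ≤ ε := min_le_left _ _
    set y : ℝ := 2 - m with hydef
    have hy0 : 0 ≤ y := by simp only [hydef]; linarith
    have hy2 : y < 2 := by simp only [hydef]; linarith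
    have h := xi_tendsto_of_lt_two hy0 hy2
    rw [Metric.tendsto_atTop] at h
    obtain ⟨B, hB⟩ := h (m/2) (by linarith)
    refine ⟨max B 1, fun β hβB => ?_⟩
    have hβ : 0 < β := lt_of_lt_of_le one_pos (le_trans (le_max_right _ _) hβB)
    have hy := hB β (le_trans (le_max_left _ _) hβB)
    rw [Real.dist_eq, abs_lt] at hy
    have hyx : xi β ⌈β * x⌉₊ ≤ xi β ⌈β * y⌉₊ := by
      apply xi_anti hβ
      exact Nat.ceil_le_ceil (by nlinarith : β * y ≤ β * x)
    have hpos := xi_pos hβ ⌈β * x⌉₊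
    rw [Real.dist_eq, abs_lt]
    have hyval : 1 - y/2 = m/2 := by simp only [hydef]; ring
    rw [hyval] at hy
    constructor
    · linarith
    · linarith
end
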